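/- Let k₁, k₂ > 0, t ∈ ℝ, 0 < φ < π, and let f and g be analytic in the strip S_ε = {z ∈ ℂ : |Im z| < 1+ε} for some ε > 0. Then for all M, N > 0: ⟨Λf, g⟩_{M,N} − ⟨f, Λg⟩_{M,N} = [f,g](N) − [f,g](−M). -/

import Mathlib

noncomputable section

open MeasureTheory Filter Topology Set Asymptotics ComplexConjugate
open Complex (I)

/-- The weight function `w(z)`. -/
def wfun (k₁ k₂ t φ : ℝ) (z : ℂ) : ℂ :=
  ((1 / (2 * Real.pi) : ℝ) : ℂ) *
    Complex.exp ((2 * z + (t : ℂ)) * (2 * (φ : ℂ) - (Real.pi : ℂ))) *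
    Complex.Gamma ((k₁ : ℂ) + I * t + I * z) * Complex.Gamma ((k₁ : ℂ) - I * t - I * z) *
    Complex.Gamma ((k₂ : ℂ) + I * z) * Complex.Gamma ((k₂ : ℂ) - I * z)

/-- `α₊(z) = −e^{2iφ}(k₂ − iz)(k₁ − i(t+z))`. -/
def alphaP (k₁ k₂ t φ : ℝ) (z : ℂ) : ℂ :=
  -Complex.exp (2 * I * φ) * ((k₂ : ℂ) - I * z) * ((k₁ : ℂ) - I * ((t : ℂ) + z))

/-- `α₋(z) = −e^{−2iφ}(k₂ + iz)(k₁ + i(t+z))`. -/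
def alphaM (k₁ k₂ t φ : ℝ) (z : ℂ) : ℂ :=
  -Complex.exp (-2 * I * φ) * ((k₂ : ℂ) + I * z) * ((k₁ : ℂ) + I * ((t : ℂ) + z))

/-- `β(z) = k₁(1−k₁) + k₂(1−k₂) − 2(t+z)z`. -/
def betaF (k₁ k₂ t : ℝ) (z : ℂ) : ℂ :=
  (k₁ : ℂ) * (1 - (k₁ : ℂ)) + (k₂ : ℂ) * (1 - (k₂ : ℂ)) - 2 * ((t : ℂ) + z) * z

/-- The difference operator `Λ`. -/
def Lam (k₁ k₂ t φ : ℝ) (g : ℂ → ℂ) (z : ℂ) : ℂ :=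
  alphaP k₁ k₂ t φ z * g (z + I) + betaF k₁ k₂ t z * g z + alphaM k₁ k₂ t φ z * g (z - I)

/-- `f*(z) = conj (f (conj z))`. -/
def fstar (f : ℂ → ℂ) (z : ℂ) : ℂ := conj (f (conj z))

/-- The truncated inner product `⟨f,g⟩_{M,N} = ∫_{−M}^N f(x) g*(x) w(x) dx`. -/
def ipMN (k₁ k₂ t φ : ℝ) (f g : ℂ → ℂ) (M N : ℝ) : ℂ :=
  ∫ x in (-M)..N, f (x : ℂ) * fstar g (x : ℂ) * wfun k₁ k₂ t φ (x : ℂ)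

/-- The Wronskian `[f,g](y)`, an integral along the vertical segment from `y` to `y+i`. -/
def Wron (k₁ k₂ t φ : ℝ) (f g : ℂ → ℂ) (y : ℝ) : ℂ :=
  ∫ s in (0:ℝ)..1, I *
    ((f ((y : ℂ) + I * s) * fstar g ((y : ℂ) + I * s - I) -
        f ((y : ℂ) + I * s - I) * fstar g ((y : ℂ) + I * s)) *
      alphaM k₁ k₂ t φ ((y : ℂ) + I * s) * wfun k₁ k₂ t φ ((y : ℂ) + I * s))

/-! ### Auxiliary definitions and lemmas -/

lemma aux_ne_zero_of_re_pos {s : ℂ} (h : 0 < s.re) : s ≠ 0 := fun h0 => by simp [h0] at h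

lemma aux_ne_zero_of_re_ne {s : ℂ} (h : s.re ≠ 0) : s ≠ 0 := fun h0 => h (by simp [h0])

lemma aux_ne_zero_of_im_ne {s : ℂ} (h : s.im ≠ 0) : s ≠ 0 := fun h0 => h (by simp [h0])

lemma aux_gamma_arg {s : ℂ} (h : 0 < s.re) : ∀ m : ℕ, s ≠ -(m : ℂ) := by
  intro m hm
  rw [hm] at h
  simp only [Complex.neg_re, Complex.natCast_re] at h
  have : (0:ℝ) ≤ m := Nat.cast_nonneg m
  linarith

lemma fstar_differentiableAt {g : ℂ → ℂ} {z : ℂ} (h : DifferentiableAt ℂ g (conj z)) :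
    DifferentiableAt ℂ (fstar g) z := by
  show DifferentiableAt ℂ (fun w => (conj (g (conj w)) : ℂ)) z
  obtain ⟨d, hd⟩ : ∃ d, HasDerivAt g d (conj z) := ⟨_, h.hasDerivAt⟩
  refine HasDerivAt.differentiableAt (f' := conj d) ?_
  rw [hasDerivAt_iff_isLittleO] at hd ⊢
  have ht : Filter.Tendsto (fun w : ℂ => (conj w : ℂ)) (𝓝 z) (𝓝 (conj z)) :=
    Complex.continuous_conj.tendsto z
  have h2 := hd.comp_tendsto ht
  rw [← Asymptotics.isLittleO_norm_left, ← Asymptotics.isLittleO_norm_right] at h2 ⊢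
  have e1 : (fun w : ℂ => ‖conj (g (conj w)) - conj (g (conj z)) - (w - z) • conj d‖)
      = fun w : ℂ => ‖g (conj w) - g (conj z) - (conj w - conj z) • d‖ := by
    funext w
    have : conj (g (conj w)) - conj (g (conj z)) - (w - z) • conj d
        = conj (g (conj w) - g (conj z) - (conj w - conj z) • d) := by
      simp only [map_sub, map_mul, smul_eq_mul, Complex.conj_conj]
    rw [this, RCLike.norm_conj]
  have e2 : (fun w : ℂ => ‖w - z‖) = fun w : ℂ => ‖conj w - conj z‖ := by
    funext w
    rw [← map_sub, RCLike.norm_conj]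
  rw [e1, e2]
  exact h2

/-- Regularized version of `α₋ · w`; it is analytic on the closed strip `0 ≤ Im z ≤ 1`. -/
def wtil (k₁ k₂ t φ : ℝ) (z : ℂ) : ℂ :=
  -Complex.exp (-2 * I * φ) * (((1 / (2 * Real.pi) : ℝ)) : ℂ) *
    Complex.exp ((2 * z + (t : ℂ)) * (2 * (φ : ℂ) - (Real.pi : ℂ))) *
    Complex.Gamma ((k₁ : ℂ) + I * t + I * z + 1) * Complex.Gamma ((k₁ : ℂ) - I * t - I * z) *
    Complex.Gamma ((k₂ : ℂ) + I * z + 1) * Complex.Gamma ((k₂ : ℂ) - I * z)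

/-- The Wronskian-type combination of `f` and `g`. -/
def Gfun (f g : ℂ → ℂ) (z : ℂ) : ℂ :=
  f z * fstar g (z - I) - f (z - I) * fstar g z

/-- The function whose rectangle contour integral gives the identity. -/
def Htil (k₁ k₂ t φ : ℝ) (f g : ℂ → ℂ) (z : ℂ) : ℂ :=
  Gfun f g z * wtil k₁ k₂ t φ z

lemma wtil_eq (k₁ k₂ t φ : ℝ) (z : ℂ) (h1 : (k₁ : ℂ) + I * t + I * z ≠ 0)
    (h2 : (k₂ : ℂ) + I * z ≠ 0) :
    wtil k₁ k₂ t φ z = alphaM k₁ k₂ t φ z * wfun k₁ k₂ t φ z := by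
  unfold wtil alphaM wfun
  rw [Complex.Gamma_add_one _ h1, Complex.Gamma_add_one _ h2]
  ring

lemma wtil_shift (k₁ k₂ t φ : ℝ) (z : ℂ) (h1 : (k₁ : ℂ) - I * t - I * z ≠ 0)
    (h2 : (k₂ : ℂ) - I * z ≠ 0) :
    wtil k₁ k₂ t φ (z + I) = alphaP k₁ k₂ t φ z * wfun k₁ k₂ t φ z := by
  unfold wtil alphaP wfun
  rw [show (k₁ : ℂ) + I * t + I * (z + I) + 1 = (k₁ : ℂ) + I * t + I * z from by
    linear_combination Complex.I_mul_I]
  rw [show (k₁ : ℂ) - I * t - I * (z + I) = ((k₁ : ℂ) - I * t - I * z) + 1 from by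
    linear_combination -Complex.I_mul_I]
  rw [show (k₂ : ℂ) + I * (z + I) + 1 = (k₂ : ℂ) + I * z from by
    linear_combination Complex.I_mul_I]
  rw [show (k₂ : ℂ) - I * (z + I) = ((k₂ : ℂ) - I * z) + 1 from by
    linear_combination -Complex.I_mul_I]
  rw [Complex.Gamma_add_one _ h1, Complex.Gamma_add_one _ h2]
  rw [show (2 * (z + I) + (t : ℂ)) * (2 * (φ : ℂ) - (Real.pi : ℂ))
      = (2 * z + (t : ℂ)) * (2 * (φ : ℂ) - (Real.pi : ℂ))
        + (2 * I * (φ : ℂ) + (2 * I * (φ : ℂ) - 2 * (Real.pi : ℂ) * I)) from by ring,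
    Complex.exp_add]
  have key : Complex.exp (-2 * I * (φ : ℂ)) *
      Complex.exp (2 * I * (φ : ℂ) + (2 * I * (φ : ℂ) - 2 * (Real.pi : ℂ) * I))
      = Complex.exp (2 * I * (φ : ℂ)) := by
    rw [← Complex.exp_add,
      show -2 * I * (φ : ℂ) + (2 * I * (φ : ℂ) + (2 * I * (φ : ℂ) - 2 * (Real.pi : ℂ) * I))
        = 2 * I * (φ : ℂ) - 2 * (Real.pi : ℂ) * I from by ring,
      Complex.exp_sub, Complex.exp_two_pi_mul_I, div_one]
  linear_combination (-((((1 / (2 * Real.pi) : ℝ)) : ℂ) *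
    Complex.exp ((2 * z + (t : ℂ)) * (2 * (φ : ℂ) - (Real.pi : ℂ))) *
    Complex.Gamma ((k₁ : ℂ) + I * t + I * z) * Complex.Gamma ((k₁ : ℂ) - I * t - I * z) *
    Complex.Gamma ((k₂ : ℂ) + I * z) * Complex.Gamma ((k₂ : ℂ) - I * z) *
    ((k₁ : ℂ) - I * t - I * z) * ((k₂ : ℂ) - I * z))) * key

lemma fstar_Lam (k₁ k₂ t φ : ℝ) (g : ℂ → ℂ) (z : ℂ) :
    fstar (Lam k₁ k₂ t φ g) z =
      alphaM k₁ k₂ t φ z * fstar g (z - I) + betaF k₁ k₂ t z * fstar g z +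
        alphaP k₁ k₂ t φ z * fstar g (z + I) := by
  unfold fstar Lam alphaP alphaM betaF
  have e1 : conj z + I = conj (z - I) := by
    simp [map_sub, Complex.conj_I]
  have e2 : conj z - I = conj (z + I) := by
    simp [map_add, Complex.conj_I, sub_eq_add_neg]
  rw [e1, e2]
  simp only [map_add, map_mul, map_sub, map_neg, map_one, map_ofNat, Complex.conj_conj,
    Complex.conj_I, Complex.conj_ofReal, ← Complex.exp_conj]
  ring_nf

lemma diffAt_exp_part (t φ : ℝ) (z : ℂ) :
    DifferentiableAt ℂ (fun w : ℂ =>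
      Complex.exp ((2 * w + (t : ℂ)) * (2 * (φ : ℂ) - (Real.pi : ℂ)))) z := by
  apply DifferentiableAt.cexp
  fun_prop

lemma wtil_diffAt (k₁ k₂ t φ : ℝ) (hk₁ : 0 < k₁) (hk₂ : 0 < k₂) (z : ℂ)
    (h0 : 0 ≤ z.im) (h1 : z.im ≤ 1) : DifferentiableAt ℂ (wtil k₁ k₂ t φ) z := by
  have g1 : DifferentiableAt ℂ (fun w : ℂ => Complex.Gamma ((k₁ : ℂ) + I * t + I * w + 1)) z := by
    refine DifferentiableAt.comp z (Complex.differentiableAt_Gamma _ (aux_gamma_arg ?_))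
      (by fun_prop)
    simp [Complex.add_re, Complex.mul_re]
    linarith
  have g2 : DifferentiableAt ℂ (fun w : ℂ => Complex.Gamma ((k₁ : ℂ) - I * t - I * w)) z := by
    refine DifferentiableAt.comp z (Complex.differentiableAt_Gamma _ (aux_gamma_arg ?_))
      (by fun_prop)
    simp [Complex.sub_re, Complex.mul_re]
    linarith
  have g3 : DifferentiableAt ℂ (fun w : ℂ => Complex.Gamma ((k₂ : ℂ) + I * w + 1)) z := by
    refine DifferentiableAt.comp z (Complex.differentiableAt_Gamma _ (aux_gamma_arg ?_))
      (by fun_prop)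
    simp [Complex.add_re, Complex.mul_re]
    linarith
  have g4 : DifferentiableAt ℂ (fun w : ℂ => Complex.Gamma ((k₂ : ℂ) - I * w)) z := by
    refine DifferentiableAt.comp z (Complex.differentiableAt_Gamma _ (aux_gamma_arg ?_))
      (by fun_prop)
    simp [Complex.sub_re, Complex.mul_re]
    linarith
  exact ((((((differentiableAt_const _).mul (diffAt_exp_part t φ z)).mul g1).mul g2).mul
    g3).mul g4)

lemma wfun_diffAt_real (k₁ k₂ t φ : ℝ) (hk₁ : 0 < k₁) (hk₂ : 0 < k₂) (z : ℂ)
    (h0 : z.im = 0) : DifferentiableAt ℂ (wfun k₁ k₂ t φ) z := by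
  have g1 : DifferentiableAt ℂ (fun w : ℂ => Complex.Gamma ((k₁ : ℂ) + I * t + I * w)) z := by
    refine DifferentiableAt.comp z (Complex.differentiableAt_Gamma _ (aux_gamma_arg ?_))
      (by fun_prop)
    simp [Complex.add_re, Complex.mul_re]
    linarith
  have g2 : DifferentiableAt ℂ (fun w : ℂ => Complex.Gamma ((k₁ : ℂ) - I * t - I * w)) z := by
    refine DifferentiableAt.comp z (Complex.differentiableAt_Gamma _ (aux_gamma_arg ?_))
      (by fun_prop)
    simp [Complex.sub_re, Complex.mul_re]
    linarith
  have g3 : DifferentiableAt ℂ (fun w : ℂ => Complex.Gamma ((k₂ : ℂ) + I * w)) z := by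
    refine DifferentiableAt.comp z (Complex.differentiableAt_Gamma _ (aux_gamma_arg ?_))
      (by fun_prop)
    simp [Complex.add_re, Complex.mul_re]
    linarith
  have g4 : DifferentiableAt ℂ (fun w : ℂ => Complex.Gamma ((k₂ : ℂ) - I * w)) z := by
    refine DifferentiableAt.comp z (Complex.differentiableAt_Gamma _ (aux_gamma_arg ?_))
      (by fun_prop)
    simp [Complex.sub_re, Complex.mul_re]
    linarith
  exact ((((((differentiableAt_const _).mul (diffAt_exp_part t φ z)).mul g1).mul g2).mul
    g3).mul g4)

lemma bottom_eq (k₁ k₂ t φ : ℝ) (hk₁ : 0 < k₁) (hk₂ : 0 < k₂) (f g : ℂ → ℂ) (x : ℝ) :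
    Lam k₁ k₂ t φ f (x : ℂ) * fstar g (x : ℂ) * wfun k₁ k₂ t φ (x : ℂ) -
      f (x : ℂ) * fstar (Lam k₁ k₂ t φ g) (x : ℂ) * wfun k₁ k₂ t φ (x : ℂ)
    = Htil k₁ k₂ t φ f g ((x : ℂ) + I) - Htil k₁ k₂ t φ f g (x : ℂ) := by
  have h1 : (k₁ : ℂ) + I * t + I * (x : ℂ) ≠ 0 := by
    apply aux_ne_zero_of_re_pos
    simp [Complex.add_re, Complex.mul_re]
    linarith
  have h2 : (k₂ : ℂ) + I * (x : ℂ) ≠ 0 := by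
    apply aux_ne_zero_of_re_pos
    simp [Complex.add_re, Complex.mul_re]
    linarith
  have h3 : (k₁ : ℂ) - I * t - I * (x : ℂ) ≠ 0 := by
    apply aux_ne_zero_of_re_pos
    simp [Complex.sub_re, Complex.mul_re]
    linarith
  have h4 : (k₂ : ℂ) - I * (x : ℂ) ≠ 0 := by
    apply aux_ne_zero_of_re_pos
    simp [Complex.sub_re, Complex.mul_re]
    linarith
  rw [fstar_Lam]
  unfold Htil Gfun
  rw [wtil_shift k₁ k₂ t φ (x : ℂ) h3 h4, wtil_eq k₁ k₂ t φ (x : ℂ) h1 h2]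
  simp only [add_sub_cancel_right]
  unfold Lam
  ring

lemma Wron_eq (k₁ k₂ t φ : ℝ) (f g : ℂ → ℂ) (y : ℝ) (hy : y ≠ 0) :
    Wron k₁ k₂ t φ f g y
      = I * ∫ s in (0:ℝ)..1, Htil k₁ k₂ t φ f g ((y : ℂ) + (s : ℂ) * I) := by
  unfold Wron
  rw [← intervalIntegral.integral_const_mul]
  apply intervalIntegral.integral_congr_ae
  have hae : ∀ᵐ s : ℝ, s ≠ k₁ := by
    have hs : {a : ℝ | ¬ a ≠ k₁} = {k₁} := by ext a; simp
    rw [MeasureTheory.ae_iff, hs]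
    exact measure_singleton _
  filter_upwards [hae] with s hs _
  have harg : ((y : ℂ) + I * (s : ℂ)) = ((y : ℂ) + (s : ℂ) * I) := by ring
  rw [harg]
  have h1 : (k₁ : ℂ) + I * t + I * ((y : ℂ) + (s : ℂ) * I) ≠ 0 := by
    apply aux_ne_zero_of_re_ne
    simp [Complex.add_re, Complex.mul_re]
    intro h
    exact hs (by linarith)
  have h2 : (k₂ : ℂ) + I * ((y : ℂ) + (s : ℂ) * I) ≠ 0 := by
    apply aux_ne_zero_of_im_ne
    simp [Complex.add_im, Complex.mul_im]
    exact hy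
  unfold Htil Gfun
  rw [wtil_eq k₁ k₂ t φ _ h1 h2]
  ring

/-- The basic Wronskian identity
`⟨Λf, g⟩_{M,N} − ⟨f, Λg⟩_{M,N} = [f,g](N) − [f,g](−M)`
for functions analytic in the strip `S_ε`. -/
theorem wronskian_identity (k₁ k₂ : ℝ) (hk₁ : 0 < k₁) (hk₂ : 0 < k₂) (t : ℝ)
    (φ : ℝ) (hφ₀ : 0 < φ) (hφπ : φ < Real.pi)
    (ε : ℝ) (hε : 0 < ε) (f g : ℂ → ℂ)
    (hf : AnalyticOnNhd ℂ f {z : ℂ | |z.im| < 1 + ε})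
    (hg : AnalyticOnNhd ℂ g {z : ℂ | |z.im| < 1 + ε}) :
    ∀ M N : ℝ, 0 < M → 0 < N →
      ipMN k₁ k₂ t φ (Lam k₁ k₂ t φ f) g M N - ipMN k₁ k₂ t φ f (Lam k₁ k₂ t φ g) M N =
        Wron k₁ k₂ t φ f g N - Wron k₁ k₂ t φ f g (-M) := by
  intro M N hM hN
  -- differentiability of f, g, fstar g on the closed strip |Im z| ≤ 1
  have hstripf : ∀ c : ℂ, |c.im| ≤ 1 → DifferentiableAt ℂ f c := fun c hc =>
    (hf c (by simp only [Set.mem_setOf_eq]; linarith)).differentiableAt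
  have hstripg : ∀ c : ℂ, |c.im| ≤ 1 → DifferentiableAt ℂ g c := fun c hc =>
    (hg c (by simp only [Set.mem_setOf_eq]; linarith)).differentiableAt
  have hfsg : ∀ c : ℂ, |c.im| ≤ 1 → DifferentiableAt ℂ (fstar g) c := fun c hc =>
    fstar_differentiableAt (hstripg (conj c) (by simpa using hc))
  -- differentiability of Htil on the closed strip 0 ≤ Im z ≤ 1
  have hHd : ∀ z : ℂ, 0 ≤ z.im → z.im ≤ 1 →
      DifferentiableAt ℂ (Htil k₁ k₂ t φ f g) z := by
    intro z h0 h1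
    have habs : |z.im| ≤ 1 := abs_le.2 ⟨by linarith, h1⟩
    have habs' : |(z - I).im| ≤ 1 := by
      simp only [Complex.sub_im, Complex.I_im]
      exact abs_le.2 ⟨by linarith, by linarith⟩
    have df : DifferentiableAt ℂ f z := hstripf z habs
    have dfm : DifferentiableAt ℂ (fun w => f (w - I)) z :=
      (hstripf (z - I) habs').comp z (differentiableAt_id.sub_const I)
    have dg : DifferentiableAt ℂ (fstar g) z := hfsg z habs
    have dgm : DifferentiableAt ℂ (fun w => fstar g (w - I)) z :=
      by have := (hfsg (z - I) habs').comp z (differentiableAt_id.sub_const I); exact this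
    exact ((df.mul dgm).sub (dfm.mul dg)).mul (wtil_diffAt k₁ k₂ t φ hk₁ hk₂ z h0 h1)
  -- continuity along horizontal lines
  have cline : ∀ c : ℂ, Continuous fun x : ℝ => ((x : ℂ) + c) := fun c =>
    Complex.continuous_ofReal.add continuous_const
  have cf : ∀ c : ℂ, |c.im| ≤ 1 → Continuous fun x : ℝ => f ((x : ℂ) + c) := fun c hc =>
    continuous_iff_continuousAt.2 fun x =>
      ContinuousAt.comp (g := f) (f := fun x : ℝ => (x : ℂ) + c)
        ((hstripf ((x : ℂ) + c) (by simpa using hc)).continuousAt) (cline c).continuousAt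
  have cg : ∀ c : ℂ, |c.im| ≤ 1 → Continuous fun x : ℝ => g ((x : ℂ) + c) := fun c hc =>
    continuous_iff_continuousAt.2 fun x =>
      ContinuousAt.comp (g := g) (f := fun x : ℝ => (x : ℂ) + c)
        ((hstripg ((x : ℂ) + c) (by simpa using hc)).continuousAt) (cline c).continuousAt
  have cfs : ∀ c : ℂ, |c.im| ≤ 1 → Continuous fun x : ℝ => fstar g ((x : ℂ) + c) := by
    intro c hc
    have hg' : Continuous fun x : ℝ => (conj (g ((x : ℂ) + conj c)) : ℂ) :=
      Complex.continuous_conj.comp (cg (conj c) (by simpa using hc))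
    refine hg'.congr fun x => ?_
    simp [fstar, map_add, Complex.conj_ofReal]
  have cHtil : ∀ c : ℂ, 0 ≤ c.im → c.im ≤ 1 →
      Continuous fun x : ℝ => Htil k₁ k₂ t φ f g ((x : ℂ) + c) := fun c h0 h1 =>
    continuous_iff_continuousAt.2 fun x =>
      ContinuousAt.comp (g := Htil k₁ k₂ t φ f g) (f := fun x : ℝ => (x : ℂ) + c)
        ((hHd ((x : ℂ) + c) (by simpa using h0) (by simpa using h1)).continuousAt)
        (cline c).continuousAt
  have cw : Continuous fun x : ℝ => wfun k₁ k₂ t φ (x : ℂ) :=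
    continuous_iff_continuousAt.2 fun x =>
      ContinuousAt.comp (g := wfun k₁ k₂ t φ) (f := fun x : ℝ => (x : ℂ))
        ((wfun_diffAt_real k₁ k₂ t φ hk₁ hk₂ (x : ℂ) (by simp)).continuousAt)
        Complex.continuous_ofReal.continuousAt
  have c1 : Continuous fun x : ℝ => f ((x : ℂ) + I) := cf I (by simp)
  have c2 : Continuous fun x : ℝ => f (x : ℂ) := by
    simpa using cf 0 (by simp)
  have c3 : Continuous fun x : ℝ => f ((x : ℂ) - I) := by
    simpa [← sub_eq_add_neg] using cf (-I) (by simp)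
  have cs1 : Continuous fun x : ℝ => fstar g ((x : ℂ) + I) := cfs I (by simp)
  have cs2 : Continuous fun x : ℝ => fstar g (x : ℂ) := by
    simpa using cfs 0 (by simp)
  have cs3 : Continuous fun x : ℝ => fstar g ((x : ℂ) - I) := by
    simpa [← sub_eq_add_neg] using cfs (-I) (by simp)
  have cαP : Continuous fun x : ℝ => alphaP k₁ k₂ t φ (x : ℂ) := by
    unfold alphaP; fun_prop
  have cαM : Continuous fun x : ℝ => alphaM k₁ k₂ t φ (x : ℂ) := by
    unfold alphaM; fun_prop
  have cβ : Continuous fun x : ℝ => betaF k₁ k₂ t (x : ℂ) := by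
    unfold betaF; fun_prop
  have cA : Continuous fun x : ℝ =>
      Lam k₁ k₂ t φ f (x : ℂ) * fstar g (x : ℂ) * wfun k₁ k₂ t φ (x : ℂ) := by
    have : Continuous fun x : ℝ => Lam k₁ k₂ t φ f (x : ℂ) := by
      unfold Lam
      exact ((cαP.mul c1).add (cβ.mul c2)).add (cαM.mul c3)
    exact (this.mul cs2).mul cw
  have cB : Continuous fun x : ℝ =>
      f (x : ℂ) * fstar (Lam k₁ k₂ t φ g) (x : ℂ) * wfun k₁ k₂ t φ (x : ℂ) := by
    have cmid : Continuous fun x : ℝ => fstar (Lam k₁ k₂ t φ g) (x : ℂ) := by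
      have h : Continuous fun x : ℝ =>
          alphaM k₁ k₂ t φ (x : ℂ) * fstar g ((x : ℂ) - I) +
            betaF k₁ k₂ t (x : ℂ) * fstar g (x : ℂ) +
            alphaP k₁ k₂ t φ (x : ℂ) * fstar g ((x : ℂ) + I) :=
        ((cαM.mul cs3).add (cβ.mul cs2)).add (cαP.mul cs1)
      exact h.congr fun x => (fstar_Lam k₁ k₂ t φ g (x : ℂ)).symm
    exact (c2.mul cmid).mul cw
  have cTop : Continuous fun x : ℝ => Htil k₁ k₂ t φ f g ((x : ℂ) + I) :=
    cHtil I (by simp) (by simp)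
  have cBot : Continuous fun x : ℝ => Htil k₁ k₂ t φ f g (x : ℂ) := by
    simpa using cHtil 0 (by simp) (by simp)
  -- Cauchy's theorem on the rectangle
  have key := Complex.integral_boundary_rect_eq_zero_of_differentiableOn
      (Htil k₁ k₂ t φ f g) ((-M : ℝ) : ℂ) (((N : ℝ) : ℂ) + I) (by
    intro x hx
    rw [Complex.mem_reProdIm] at hx
    have h2 := hx.2
    simp only [Complex.ofReal_im, Complex.add_im, Complex.I_im, zero_add] at h2
    rw [Set.uIcc_of_le (by norm_num : (0:ℝ) ≤ 1)] at h2
    exact (hHd x h2.1 h2.2).differentiableWithinAt)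
  simp only [Complex.ofReal_re, Complex.ofReal_im, Complex.add_re, Complex.add_im,
    Complex.I_re, Complex.I_im, Complex.ofReal_zero, Complex.ofReal_one, zero_mul, one_mul,
    add_zero, zero_add, smul_eq_mul] at key
  -- assemble
  have hsplit : ipMN k₁ k₂ t φ (Lam k₁ k₂ t φ f) g M N - ipMN k₁ k₂ t φ f (Lam k₁ k₂ t φ g) M N
      = (∫ x in (-M)..N, Htil k₁ k₂ t φ f g ((x : ℂ) + I))
        - ∫ x in (-M)..N, Htil k₁ k₂ t φ f g (x : ℂ) := by
    unfold ipMN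
    rw [← intervalIntegral.integral_sub (cA.intervalIntegrable _ _) (cB.intervalIntegrable _ _)]
    rw [intervalIntegral.integral_congr
      (g := fun x : ℝ => Htil k₁ k₂ t φ f g ((x : ℂ) + I) - Htil k₁ k₂ t φ f g (x : ℂ))
      (fun x _ => bottom_eq k₁ k₂ t φ hk₁ hk₂ f g x)]
    exact intervalIntegral.integral_sub (cTop.intervalIntegrable _ _)
      (cBot.intervalIntegrable _ _)
  rw [hsplit, Wron_eq k₁ k₂ t φ f g N (ne_of_gt hN),
    Wron_eq k₁ k₂ t φ f g (-M) (by intro h; exact (ne_of_gt hM) (by linarith))]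
  linear_combination -key
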